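/- With β and β_m as above, ∑_{m=0}^∞ 2β / ((3^{m+1} - 1) · ∏_{j=1}^m (3^j - 1)) = 2(1 - β). -/

import Mathlib

/-!
Put `q = 1/3`, so that `1 / ∏_{j=1}^m (3^j - 1) = q^{m(m+1)/2} / ((1 - q) ⋯ (1 - q^m))`.
The series `S(x) = ∑ₘ xᵐ q^{m(m+1)/2} / ((1 - q) ⋯ (1 - q^m))` satisfies `S(x) = (1 + qx) S(qx)`;
iterating and letting `q^N x → 0` gives Euler's expansion `S(x) = ∏_{n≥1} (1 + qⁿ x)`.
The sum in the theorem is `2β (S(1) - 1)`, and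
`S(1) = ∏ (1 + qⁿ) = ∏ (1 - q²ⁿ) / ∏ (1 - qⁿ) = 1 / ∏ (1 - q^{2k+1}) = 1 / β`.
-/

open Finset Filter Topology

noncomputable section

namespace EulerQSeries

variable {q : ℝ}

lemma summable_pow_comp (hq : |q| < 1) {e : ℕ → ℕ} (he : Function.Injective e) :
    Summable fun n => q ^ e n :=
  (summable_geometric_of_abs_lt_one hq).comp_injective he

lemma multipliable_one_add_pow_mul (hq : |q| < 1) {e : ℕ → ℕ} (he : Function.Injective e)
    (x : ℝ) : Multipliable fun n => 1 + q ^ e n * x :=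
  Real.multipliable_one_add_of_summable ((summable_pow_comp hq he).mul_right x)

lemma multipliable_one_sub_pow (hq : |q| < 1) {e : ℕ → ℕ} (he : Function.Injective e) :
    Multipliable fun n => 1 - q ^ e n := by
  simpa only [sub_eq_add_neg] using
    Real.multipliable_one_add_of_summable (summable_pow_comp hq he).neg

lemma one_sub_pow_ne_zero (hq : |q| < 1) {n : ℕ} (hn : n ≠ 0) : 1 - q ^ n ≠ 0 := by
  have : |q ^ n| < 1 := by rw [abs_pow]; exact pow_lt_one₀ (abs_nonneg q) hq hn
  exact sub_ne_zero.2 ((le_abs_self _).trans_lt this).ne'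

theorem tprod_one_add_pow_mul_tprod_one_sub_odd_pow (hq : |q| < 1) :
    (∏' n : ℕ, (1 + q ^ (n + 1))) * ∏' k : ℕ, (1 - q ^ (2 * k + 1)) = 1 := by
  have hodd : Function.Injective fun k : ℕ => 2 * k + 1 := fun a b h => by simp_all
  have heven : Function.Injective fun k : ℕ => 2 * k + 1 + 1 := fun a b h => by simp_all
  have hsucc : Function.Injective fun n : ℕ => n + 1 := add_left_injective 1
  have hsplit : (∏' k : ℕ, (1 - q ^ (2 * k + 1))) * ∏' k : ℕ, (1 - q ^ (2 * k + 1 + 1)) =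
      ∏' n : ℕ, (1 - q ^ (n + 1)) :=
    tprod_even_mul_odd (f := fun n => 1 - q ^ (n + 1)) (multipliable_one_sub_pow hq hodd)
      (multipliable_one_sub_pow hq heven)
  have hsquare : (∏' n : ℕ, (1 + q ^ (n + 1))) * ∏' n : ℕ, (1 - q ^ (n + 1)) =
      ∏' k : ℕ, (1 - q ^ (2 * k + 1 + 1)) := by
    have hplus := multipliable_one_add_pow_mul hq hsucc 1
    simp only [mul_one] at hplus
    rw [← hplus.tprod_mul (multipliable_one_sub_pow hq hsucc)]
    exact tprod_congr fun n => by ring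
  have heven_ne : ∏' k : ℕ, (1 - q ^ (2 * k + 1 + 1)) ≠ 0 := by
    simp only [sub_eq_add_neg]
    refine tprod_one_add_ne_zero_of_summable (fun k => ?_) (summable_pow_comp hq heven).neg.norm
    simpa only [sub_eq_add_neg] using one_sub_pow_ne_zero hq (Nat.succ_ne_zero _)
  refine mul_right_cancel₀ heven_ne ?_
  rw [one_mul, mul_assoc, hsplit, hsquare]

def eulerCoeff (q : ℝ) (m : ℕ) : ℝ := ∏ j ∈ range m, q ^ (j + 1) / (1 - q ^ (j + 1))

def eulerSeries (q x : ℝ) : ℝ := ∑' m, x ^ m * eulerCoeff q m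

@[simp]
lemma eulerCoeff_zero : eulerCoeff q 0 = 1 := prod_range_zero _

lemma eulerCoeff_succ (m : ℕ) :
    eulerCoeff q (m + 1) = eulerCoeff q m * (q ^ (m + 1) / (1 - q ^ (m + 1))) :=
  prod_range_succ _ _

lemma eulerCoeff_succ_eq_pow_mul (hq : |q| < 1) (m : ℕ) :
    eulerCoeff q (m + 1) = q ^ (m + 1) * (eulerCoeff q m + eulerCoeff q (m + 1)) := by
  have hne := one_sub_pow_ne_zero hq (Nat.succ_ne_zero m)
  rw [eulerCoeff_succ]
  field_simp
  ring

lemma summable_pow_mul_eulerCoeff (hq : |q| < 1) (x : ℝ) :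
    Summable fun m => x ^ m * eulerCoeff q m := by
  have hratio : Tendsto (fun m : ℕ => x * (q ^ (m + 1) / (1 - q ^ (m + 1)))) atTop (𝓝 0) := by
    have hpow := (tendsto_pow_atTop_nhds_zero_of_abs_lt_one hq).comp (tendsto_add_atTop_nat 1)
    simpa using (hpow.div (tendsto_const_nhds.sub hpow) (by simp)).const_mul x
  refine summable_of_ratio_norm_eventually_le (r := 1 / 2) (by norm_num) ?_
  filter_upwards [hratio.norm.eventually (gt_mem_nhds (by norm_num : ‖(0 : ℝ)‖ < 1 / 2))]
    with m hm
  rw [eulerCoeff_succ, pow_succ,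
    show x ^ m * x * (eulerCoeff q m * (q ^ (m + 1) / (1 - q ^ (m + 1)))) =
      (x * (q ^ (m + 1) / (1 - q ^ (m + 1)))) * (x ^ m * eulerCoeff q m) by ring, norm_mul]
  exact mul_le_mul_of_nonneg_right hm.le (norm_nonneg _)

lemma eulerSeries_eq_one_add (hq : |q| < 1) (x : ℝ) :
    eulerSeries q x = 1 + ∑' m, x ^ (m + 1) * eulerCoeff q (m + 1) := by
  rw [eulerSeries, (summable_pow_mul_eulerCoeff hq x).tsum_eq_zero_add, pow_zero, eulerCoeff_zero,
    mul_one]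

lemma eulerSeries_eq_mul_eulerSeries (hq : |q| < 1) (x : ℝ) :
    eulerSeries q x = (1 + q * x) * eulerSeries q (q * x) := by
  have hterm : ∀ m, x ^ (m + 1) * eulerCoeff q (m + 1) =
      q * x * ((q * x) ^ m * eulerCoeff q m) + (q * x) ^ (m + 1) * eulerCoeff q (m + 1) := by
    intro m
    conv_lhs => rw [eulerCoeff_succ_eq_pow_mul hq]
    ring
  have hshift : Summable fun m => (q * x) ^ (m + 1) * eulerCoeff q (m + 1) :=
    (summable_pow_mul_eulerCoeff hq (q * x)).comp_injective (add_left_injective 1)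
  have hsplit : ∑' m, x ^ (m + 1) * eulerCoeff q (m + 1) =
      q * x * eulerSeries q (q * x) + ∑' m, (q * x) ^ (m + 1) * eulerCoeff q (m + 1) := by
    rw [tsum_congr hterm,
      ((summable_pow_mul_eulerCoeff hq (q * x)).mul_left (q * x)).tsum_add hshift, tsum_mul_left,
      eulerSeries]
  rw [eulerSeries_eq_one_add hq x, hsplit, eulerSeries_eq_one_add hq (q * x)]
  ring

lemma eulerSeries_zero (hq : |q| < 1) : eulerSeries q 0 = 1 := by
  simp [eulerSeries_eq_one_add hq]

lemma eulerSeries_eq_prod_mul_eulerSeries (hq : |q| < 1) (x : ℝ) (N : ℕ) :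
    eulerSeries q x = (∏ n ∈ range N, (1 + q ^ (n + 1) * x)) * eulerSeries q (q ^ N * x) := by
  induction N with
  | zero => simp
  | succ N ih =>
    rw [ih, eulerSeries_eq_mul_eulerSeries hq (q ^ N * x), prod_range_succ, ← mul_assoc, pow_succ',
      mul_assoc q]

lemma tendsto_eulerSeries_pow_mul (hq : |q| < 1) (x : ℝ) :
    Tendsto (fun N => eulerSeries q (q ^ N * x)) atTop (𝓝 1) := by
  rw [← eulerSeries_zero hq]
  have hpow : Tendsto (fun N => q ^ N * x) atTop (𝓝 0) := by
    simpa using (tendsto_pow_atTop_nhds_zero_of_abs_lt_one hq).mul_const x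
  refine tendsto_tsum_of_dominated_convergence (summable_pow_mul_eulerCoeff hq x).norm
    (fun m => (hpow.pow m).mul_const _) (Eventually.of_forall fun N m => ?_)
  simp only [Real.norm_eq_abs, abs_mul, abs_pow]
  gcongr
  exact mul_le_of_le_one_left (abs_nonneg x) (pow_le_one₀ (abs_nonneg q) hq.le)

theorem tprod_one_add_pow_mul_eq_eulerSeries (hq : |q| < 1) (x : ℝ) :
    ∏' n : ℕ, (1 + q ^ (n + 1) * x) = eulerSeries q x := by
  have hprod := (multipliable_one_add_pow_mul hq (add_left_injective 1) x).tendsto_prod_tprod_nat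
  have hconst : Tendsto
      (fun N => (∏ n ∈ range N, (1 + q ^ (n + 1) * x)) * eulerSeries q (q ^ N * x)) atTop
      (𝓝 ((∏' n : ℕ, (1 + q ^ (n + 1) * x)) * 1)) :=
    hprod.mul (tendsto_eulerSeries_pow_mul hq x)
  simp only [← eulerSeries_eq_prod_mul_eulerSeries hq, mul_one] at hconst
  exact tendsto_nhds_unique hconst tendsto_const_nhds

lemma tsum_eulerCoeff_succ (hq : |q| < 1) :
    ∑' m, eulerCoeff q (m + 1) = ∏' n : ℕ, (1 + q ^ (n + 1)) - 1 := by
  have hprod := tprod_one_add_pow_mul_eq_eulerSeries hq 1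
  simp only [mul_one] at hprod
  rw [hprod, eulerSeries_eq_one_add hq 1]
  simp only [one_pow, one_mul, add_sub_cancel_left]

lemma eulerCoeff_inv {b : ℝ} (hb : b ≠ 0) (m : ℕ) :
    eulerCoeff b⁻¹ m = (∏ j ∈ range m, (b ^ (j + 1) - 1))⁻¹ := by
  rw [eulerCoeff, ← prod_inv_distrib]
  refine prod_congr rfl fun j _ => ?_
  rw [inv_pow, div_eq_mul_inv, ← mul_inv, mul_sub, mul_one, mul_inv_cancel₀ (pow_ne_zero _ hb)]

end EulerQSeries

end

open EulerQSeries in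
/-- With `β = ∏_{i≥0} (1 - 3^{-(2i+1)})`, one has
`∑_{m=0}^∞ 2β / ((3^{m+1} - 1) ∏_{j=1}^m (3^j - 1)) = 2(1 - β)`. -/
theorem stmt_3 (β : ℝ) (hβ : β = ∏' i : ℕ, (1 - ((3 : ℝ) ^ (2 * i + 1))⁻¹)) :
    (∑' m : ℕ, 2 * β /
        (((3 : ℝ) ^ (m + 1) - 1) * ∏ j ∈ Finset.range m, ((3 : ℝ) ^ (j + 1) - 1))) =
      2 * (1 - β) := by
  have hq : |(3 : ℝ)⁻¹| < 1 := by norm_num [abs_of_pos]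
  have hβq : β = ∏' k : ℕ, (1 - (3 : ℝ)⁻¹ ^ (2 * k + 1)) := by simp only [hβ, inv_pow]
  have hterm : ∀ m : ℕ, 2 * β /
      (((3 : ℝ) ^ (m + 1) - 1) * ∏ j ∈ range m, ((3 : ℝ) ^ (j + 1) - 1)) =
      2 * β * eulerCoeff (3 : ℝ)⁻¹ (m + 1) := fun m => by
    rw [eulerCoeff_inv three_ne_zero, prod_range_succ, mul_comm (∏ j ∈ range m, _), div_eq_mul_inv]
  have heuler := tprod_one_add_pow_mul_tprod_one_sub_odd_pow hq
  rw [← hβq] at heuler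
  rw [tsum_congr hterm, tsum_mul_left, tsum_eulerCoeff_succ hq]
  linear_combination 2 * heuler
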